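/- If two general ellipsoids G_i and G_j (images of p-norm balls under invertible affine maps with rotation matrices) admit n ≠ 0 and γ ∈ ℝ satisfying ‖(R_i Q_i)ᵀ n‖_{q_i} ≤ ρ_iᵀ n − γ and ‖−(R_j Q_j)ᵀ n‖_{q_j} ≤ −ρ_jᵀ n + γ with strict inequality in at least one of the two, then G_i ∩ G_j = ∅. -/

import Mathlib

/-!
By Hölder's inequality, `· ⬝ᵥ n` stays within `ρ ⬝ᵥ n ± ‖(R Q)ᵀ n‖_q` on the ellipsoid
`{R x + ρ : ‖Q⁻¹ x‖_p ≤ 1}`. The two conditions therefore put `Gi` in `{y | γ ≤ y ⬝ᵥ n}` and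
`Gj` in `{y | y ⬝ᵥ n ≤ γ}`, and the strict one puts its ellipsoid in the open half-space.
-/

open Matrix BigOperators

noncomputable def pnorm {d : ℕ} (p : ℝ) (z : Fin d → ℝ) : ℝ :=
  (∑ i, |z i| ^ p) ^ (1 / p)

section Pnorm

variable {d : ℕ} {p q : ℝ}

lemma pnorm_nonneg (p : ℝ) (z : Fin d → ℝ) : 0 ≤ pnorm p z :=
  Real.rpow_nonneg (Finset.sum_nonneg fun _ _ => Real.rpow_nonneg (abs_nonneg _) _) _

@[simp]
lemma pnorm_neg (p : ℝ) (z : Fin d → ℝ) : pnorm p (-z) = pnorm p z := by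
  simp [pnorm]

lemma dotProduct_le_pnorm_mul_pnorm (hpq : p.HolderConjugate q) (z w : Fin d → ℝ) :
    z ⬝ᵥ w ≤ pnorm p z * pnorm q w :=
  Real.inner_le_Lp_mul_Lq Finset.univ z w hpq

lemma abs_dotProduct_le_pnorm_mul_pnorm (hpq : p.HolderConjugate q) (z w : Fin d → ℝ) :
    |z ⬝ᵥ w| ≤ pnorm p z * pnorm q w := by
  refine abs_le.mpr ⟨?_, dotProduct_le_pnorm_mul_pnorm hpq z w⟩
  have h := dotProduct_le_pnorm_mul_pnorm hpq (-z) w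
  rw [neg_dotProduct, pnorm_neg] at h
  linarith

end Pnorm

lemma mulVec_dotProduct_eq_of_isUnit_det {K m ι : Type*} [CommRing K] [Fintype m] [Fintype ι]
    [DecidableEq ι] (R : Matrix m ι K) {Q : Matrix ι ι K} (hQ : IsUnit Q.det) (x : ι → K)
    (n : m → K) : (R *ᵥ x) ⬝ᵥ n = (Q⁻¹ *ᵥ x) ⬝ᵥ ((R * Q)ᵀ *ᵥ n) := by
  rw [dotProduct_mulVec, vecMul_transpose, mulVec_mulVec, Matrix.mul_assoc,
    mul_nonsing_inv _ hQ, Matrix.mul_one]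

lemma abs_mulVec_dotProduct_le_pnorm {m : Type*} [Fintype m] {d : ℕ} {p q : ℝ}
    (hpq : p.HolderConjugate q) (R : Matrix m (Fin d) ℝ) {Q : Matrix (Fin d) (Fin d) ℝ}
    (hQ : IsUnit Q.det) (n : m → ℝ) {x : Fin d → ℝ} (hx : pnorm p (Q⁻¹ *ᵥ x) ≤ 1) :
    |(R *ᵥ x) ⬝ᵥ n| ≤ pnorm q ((R * Q)ᵀ *ᵥ n) := by
  rw [mulVec_dotProduct_eq_of_isUnit_det R hQ]
  exact (abs_dotProduct_le_pnorm_mul_pnorm hpq _ _).trans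
    (mul_le_of_le_one_left (pnorm_nonneg q _) hx)

theorem disjoint_of_strict_separation_general {d : ℕ} (pi pj qi qj : ℝ)
    (hpi : 1 < pi) (hpj : 1 < pj)
    (hqi : 1 / pi + 1 / qi = 1) (hqj : 1 / pj + 1 / qj = 1)
    (Ri Qi Rj Qj : Matrix (Fin d) (Fin d) ℝ)
    (hQi : IsUnit Qi.det) (hQj : IsUnit Qj.det)
    (ρi ρj : Fin d → ℝ) (n : Fin d → ℝ) (γ : ℝ)
    (Gi Gj : Set (Fin d → ℝ))
    (hGi : Gi = {y | ∃ x : Fin d → ℝ, pnorm pi (Qi⁻¹ *ᵥ x) ≤ 1 ∧ y = Ri *ᵥ x + ρi})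
    (hGj : Gj = {y | ∃ x : Fin d → ℝ, pnorm pj (Qj⁻¹ *ᵥ x) ≤ 1 ∧ y = Rj *ᵥ x + ρj})
    (hi : pnorm qi ((Ri * Qi)ᵀ *ᵥ n) ≤ ρi ⬝ᵥ n - γ)
    (hj : pnorm qj (-((Rj * Qj)ᵀ *ᵥ n)) ≤ -(ρj ⬝ᵥ n) + γ)
    (hstrict : pnorm qi ((Ri * Qi)ᵀ *ᵥ n) < ρi ⬝ᵥ n - γ ∨
      pnorm qj (-((Rj * Qj)ᵀ *ᵥ n)) < -(ρj ⬝ᵥ n) + γ) :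
    Gi ∩ Gj = ∅ := by
  have hpqi : pi.HolderConjugate qi :=
    Real.holderConjugate_iff.mpr ⟨hpi, by simpa only [one_div] using hqi⟩
  have hpqj : pj.HolderConjugate qj :=
    Real.holderConjugate_iff.mpr ⟨hpj, by simpa only [one_div] using hqj⟩
  subst hGi hGj
  rw [Set.eq_empty_iff_forall_notMem]
  rintro _ ⟨⟨xi, hxi, rfl⟩, xj, hxj, hy⟩
  have hbi := abs_le.mp (abs_mulVec_dotProduct_le_pnorm hpqi Ri hQi n hxi)
  have hbj := abs_le.mp (abs_mulVec_dotProduct_le_pnorm hpqj Rj hQj n hxj)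
  have hyn := congrArg (· ⬝ᵥ n) hy
  simp only [add_dotProduct] at hyn
  rw [pnorm_neg] at hj hstrict
  rcases hstrict with h | h <;> linarith [hbi.1, hbj.2]

/-- If the separating-hyperplane conditions hold with strict inequality in at
least one of the two, then the two general ellipsoids are disjoint. -/
theorem disjoint_of_strict_separation {d : ℕ} (pi pj qi qj : ℝ)
    (hpi : 1 < pi) (hpj : 1 < pj)
    (hqi : 1 / pi + 1 / qi = 1) (hqj : 1 / pj + 1 / qj = 1)
    (Ri Qi Rj Qj : Matrix (Fin d) (Fin d) ℝ)
    (hRi : Riᵀ * Ri = 1 ∧ Ri.det = 1) (hRj : Rjᵀ * Rj = 1 ∧ Rj.det = 1)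
    (hQi : IsUnit Qi.det) (hQj : IsUnit Qj.det)
    (ρi ρj : Fin d → ℝ) (n : Fin d → ℝ) (hn : n ≠ 0) (γ : ℝ)
    (Gi Gj : Set (Fin d → ℝ))
    (hGi : Gi = {y | ∃ x : Fin d → ℝ, pnorm pi (Qi⁻¹ *ᵥ x) ≤ 1 ∧ y = Ri *ᵥ x + ρi})
    (hGj : Gj = {y | ∃ x : Fin d → ℝ, pnorm pj (Qj⁻¹ *ᵥ x) ≤ 1 ∧ y = Rj *ᵥ x + ρj})
    (hi : pnorm qi ((Ri * Qi)ᵀ *ᵥ n) ≤ ρi ⬝ᵥ n - γ)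
    (hj : pnorm qj (-((Rj * Qj)ᵀ *ᵥ n)) ≤ -(ρj ⬝ᵥ n) + γ)
    (hstrict : pnorm qi ((Ri * Qi)ᵀ *ᵥ n) < ρi ⬝ᵥ n - γ ∨
      pnorm qj (-((Rj * Qj)ᵀ *ᵥ n)) < -(ρj ⬝ᵥ n) + γ) :
    Gi ∩ Gj = ∅ :=
  disjoint_of_strict_separation_general pi pj qi qj hpi hpj hqi hqj Ri Qi Rj Qj hQi hQj ρi ρj n γ Gi
    Gj hGi hGj hi hj hstrict
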